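/- (Sobolev-like equivalence for the creation operator) Let ∂̂ u := u' + (x/2)u. If ∂̂ⁿ u ∈ L²(ℝ) for n = 0,…,m, then for all nonnegative integers m₁, m₂ with m₁ + m₂ ≤ m, the function x^{m₁} u^{(m₂)} belongs to L²(ℝ), and there exist positive constants K₁(m), K₂(m) depending only on m such that K₁(m) · max_{m₁+m₂≤m} ‖x^{m₁} u^{(m₂)}‖ ≤ max_{0≤i≤m} ‖∂̂^i u‖ ≤ K₂(m) · max_{m₁+m₂≤m} ‖x^{m₁} u^{(m₂)}‖, where ‖·‖ is the L²(ℝ) norm. -/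

import Mathlib

open MeasureTheory
open scoped ContDiff

/-- The creation ("raising") operator `∂̂ u := u' + (x/2) u`. -/
noncomputable def hatD (u : ℝ → ℝ) : ℝ → ℝ := fun x => deriv u x + x / 2 * u x

lemma one_le_inf : (1 : WithTop ℕ∞) ≤ ∞ := by exact_mod_cast le_top

lemma contDiff_deriv' {u : ℝ → ℝ} (hu : ContDiff ℝ ∞ u) : ContDiff ℝ ∞ (deriv u) :=
  (contDiff_infty_iff_deriv.mp hu).2

lemma contDiff_hatD {u : ℝ → ℝ} (hu : ContDiff ℝ ∞ u) : ContDiff ℝ ∞ (hatD u) :=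
  (contDiff_deriv' hu).add (((contDiff_id.div_const 2)).mul hu)

lemma contDiff_hatD_iter {u : ℝ → ℝ} (hu : ContDiff ℝ ∞ u) (n : ℕ) :
    ContDiff ℝ ∞ (hatD^[n] u) := by
  induction n with
  | zero => exact hu
  | succ n ih => rw [Function.iterate_succ_apply']; exact contDiff_hatD ih

lemma contDiff_itd {u : ℝ → ℝ} (hu : ContDiff ℝ ∞ u) (n : ℕ) :
    ContDiff ℝ ∞ (iteratedDeriv n u) := by
  induction n with
  | zero => simpa using hu
  | succ n ih => rw [iteratedDeriv_succ]; exact contDiff_deriv' ih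

lemma itd_add {f g : ℝ → ℝ} (hf : ContDiff ℝ ∞ f) (hg : ContDiff ℝ ∞ g) (n : ℕ) :
    iteratedDeriv n (fun x => f x + g x) = fun x => iteratedDeriv n f x + iteratedDeriv n g x := by
  funext x
  have := iteratedDerivWithin_add (Set.mem_univ x) uniqueDiffOn_univ
    (f := f) (g := g) (n := n) (hf.contDiffWithinAt.of_le (by exact_mod_cast le_top)) (hg.contDiffWithinAt.of_le (by exact_mod_cast le_top))
  rw [iteratedDerivWithin_univ, iteratedDerivWithin_univ, iteratedDerivWithin_univ] at this
  exact this

lemma itd_const_mul {g : ℝ → ℝ} (hg : ContDiff ℝ ∞ g) (c : ℝ) (n : ℕ) :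
    iteratedDeriv n (fun x => c * g x) = fun x => c * iteratedDeriv n g x := by
  funext x
  have := iteratedDerivWithin_const_mul (Set.mem_univ x) uniqueDiffOn_univ
    (c := c) (f := g) (n := n) (hg.contDiffWithinAt.of_le (by exact_mod_cast le_top))
  simpa [iteratedDerivWithin_univ] using this

/-- Leibniz rule for `x * g x`. -/
lemma itd_id_mul {g : ℝ → ℝ} (hg : ContDiff ℝ ∞ g) (n : ℕ) (x : ℝ) :
    iteratedDeriv n (fun y => y * g y) x
      = x * iteratedDeriv n g x + n * iteratedDeriv (n - 1) g x := by
  induction n generalizing g with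
  | zero => simp
  | succ n ih =>
    have hg' : ContDiff ℝ ∞ (deriv g) := contDiff_deriv' hg
    have hd : deriv (fun y => y * g y) = fun y => g y + y * deriv g y := by
      funext y
      have := (hasDerivAt_id y).mul ((hg.differentiable (by simp) y).hasDerivAt)
      exact (this.deriv).trans (by simp)
    have hmul : ContDiff ℝ ∞ (fun y : ℝ => y * deriv g y) := contDiff_id.mul hg'
    rw [iteratedDeriv_succ', hd, itd_add hg hmul n]
    simp only [ih hg']
    have e1 : iteratedDeriv n (deriv g) = iteratedDeriv (n+1) g := (iteratedDeriv_succ' ..).symm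
    rcases Nat.eq_zero_or_pos n with hn | hn
    · subst hn; simp [e1]; ring
    · have e2 : iteratedDeriv (n-1) (deriv g) = iteratedDeriv n g := by
        rw [← iteratedDeriv_succ', Nat.sub_add_cancel hn]
      rw [e1, e2]
      push_cast [Nat.add_sub_cancel]
      ring

lemma itd_hatD {g : ℝ → ℝ} (hg : ContDiff ℝ ∞ g) (b : ℕ) (x : ℝ) :
    iteratedDeriv b (hatD g) x
      = iteratedDeriv (b + 1) g x
        + (1/2) * (x * iteratedDeriv b g x + b * iteratedDeriv (b - 1) g x) := by
  have hid : ContDiff ℝ ∞ (fun y : ℝ => y * g y) := contDiff_id.mul hg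
  have hmul : ContDiff ℝ ∞ (fun y : ℝ => (1/2 : ℝ) * (y * g y)) := contDiff_const.mul hid
  have hD : hatD g = fun y => deriv g y + (1/2 : ℝ) * (y * g y) := by
    funext y; unfold hatD; ring
  rw [hD, itd_add (contDiff_deriv' hg) hmul b, itd_const_mul hid (1/2 : ℝ) b]
  have e1 : iteratedDeriv b (deriv g) = iteratedDeriv (b+1) g := (iteratedDeriv_succ' ..).symm
  simp only [e1, itd_id_mul hg]

/-- squared eLpNorm at p = 2 as a lintegral. -/
lemma sq_eLpNorm (h : ℝ → ℝ) :
    (eLpNorm h 2 volume) ^ (2:ℝ) = ∫⁻ x, ENNReal.ofReal (h x ^ 2) := by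
  rw [eLpNorm_eq_lintegral_rpow_enorm_toReal (by norm_num) (by norm_num)]
  simp only [ENNReal.toReal_ofNat]
  rw [← ENNReal.rpow_mul]
  norm_num
  congr 1
  funext x
  rw [Real.enorm_eq_ofReal_abs, ← ENNReal.ofReal_pow (abs_nonneg _), sq_abs]

lemma lintegral_sq_eq (h : ℝ → ℝ) :
    (∫⁻ x, ENNReal.ofReal (h x ^ 2)) = (eLpNorm h 2 volume) ^ (2:ℝ) := (sq_eLpNorm h).symm

lemma L1 {u : ℝ → ℝ} (hu : ContDiff ℝ ∞ u) (h0 : MemLp u 2 (volume : Measure ℝ))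
    (h1 : MemLp (hatD u) 2 (volume : Measure ℝ)) :
    (MemLp (deriv u) 2 (volume : Measure ℝ) ∧ MemLp (fun x => x * u x) 2 (volume : Measure ℝ)) ∧
    eLpNorm (deriv u) 2 volume ≤ eLpNorm (hatD u) 2 volume + eLpNorm u 2 volume ∧
    eLpNorm (fun x => x * u x) 2 volume
      ≤ 2 * (eLpNorm (hatD u) 2 volume + eLpNorm u 2 volume) := by
  have hu' : Differentiable ℝ u := hu.differentiable (by simp)
  have hcu : Continuous u := hu.continuous
  have hcd : Continuous (deriv u) := (contDiff_deriv' hu).continuous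
  have hcf : Continuous (hatD u) := (contDiff_hatD hu).continuous
  have hφ : ∀ x : ℝ, HasDerivAt (fun y => y * (u y)^2 / 2)
      (u x ^ 2 / 2 + x * (u x * deriv u x)) x := by
    intro x
    have hd1 : HasDerivAt u (deriv u x) x := (hu' x).hasDerivAt
    have hd2 : HasDerivAt (fun y => (u y)^2) ((2:ℕ) * u x ^ 1 * deriv u x) x := hd1.pow 2
    have hd3 := ((hasDerivAt_id x).mul hd2).div_const 2
    refine hd3.congr_deriv ?_
    simp only [id_eq, pow_one]
    push_cast
    ring
  have hψc : Continuous (fun x : ℝ => u x ^ 2 / 2 + x * (u x * deriv u x)) := by fun_prop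
  have hfint : Integrable (fun x => hatD u x ^ 2) volume := h1.integrable_sq
  have huint : Integrable (fun x => u x ^ 2) volume := h0.integrable_sq
  have hsum_int : Integrable (fun x => hatD u x ^ 2 + u x ^ 2 / 2) volume :=
    hfint.add (huint.div_const 2)
  set B : ℝ := ∫ x, (hatD u x ^ 2 + u x ^ 2 / 2) with hB
  have key : ∀ R : ℝ, 0 ≤ R →
      (∫ x in (-R)..R, ((deriv u x)^2 + (x/2 * u x)^2)) ≤ B := by
    intro R hR
    have e1 : ∀ x : ℝ, (deriv u x)^2 + (x/2 * u x)^2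
        = (hatD u x ^ 2 + u x ^ 2 / 2) - (u x ^ 2 / 2 + x * (u x * deriv u x)) := by
      intro x; simp only [hatD]; ring
    have hint1 : IntervalIntegrable (fun x => hatD u x ^ 2 + u x ^ 2 / 2) volume (-R) R :=
      (by fun_prop : Continuous (fun x : ℝ => hatD u x ^ 2 + u x ^ 2 / 2)).intervalIntegrable _ _
    have hint2 : IntervalIntegrable (fun x : ℝ => u x ^ 2 / 2 + x * (u x * deriv u x))
        volume (-R) R := hψc.intervalIntegrable _ _
    rw [intervalIntegral.integral_congr (g := fun x =>
        (hatD u x ^ 2 + u x ^ 2 / 2) - (u x ^ 2 / 2 + x * (u x * deriv u x)))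
      (fun x _ => e1 x)]
    rw [intervalIntegral.integral_sub hint1 hint2]
    have hFTC : (∫ x in (-R)..R, (u x ^ 2 / 2 + x * (u x * deriv u x)))
        = (-R) * (u (-R))^2 / 2 - (-R) * (u (-R))^2 / 2 + (R * (u R)^2 / 2 - (-R) * (u (-R))^2 / 2) := by
      have := intervalIntegral.integral_eq_sub_of_hasDerivAt
        (f := fun y => y * (u y)^2 / 2) (a := -R) (b := R) (fun x _ => hφ x)
        (hψc.intervalIntegrable _ _)
      rw [this]; ring
    rw [hFTC]
    have hle : (∫ x in (-R)..R, (hatD u x ^ 2 + u x ^ 2 / 2)) ≤ B := by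
      rw [intervalIntegral.integral_of_le (by linarith)]
      exact setIntegral_le_integral hsum_int (ae_of_all _ fun x => by positivity)
    nlinarith [sq_nonneg (u R), sq_nonneg (u (-R))]
  -- lintegral bound
  have key2 : (∫⁻ x, ENNReal.ofReal ((deriv u x)^2 + (x/2 * u x)^2)) ≤ ENNReal.ofReal B := by
    set g : ℝ → ℝ := fun x => (deriv u x)^2 + (x/2 * u x)^2 with hgdef
    have hgc : Continuous g := by fun_prop
    have hg0 : ∀ x, 0 ≤ g x := fun x => by positivity
    set F : ℕ → ℝ → ENNReal :=
      fun n => (Set.Ioc (-(n:ℝ)) n).indicator (fun x => ENNReal.ofReal (g x)) with hF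
    have hmeas : ∀ n, Measurable (F n) := fun n =>
      (ENNReal.measurable_ofReal.comp hgc.measurable).indicator measurableSet_Ioc
    have hmono : Monotone F := by
      intro a b hab
      exact Set.indicator_le_indicator_of_subset
        (Set.Ioc_subset_Ioc (neg_le_neg (by exact_mod_cast hab)) (by exact_mod_cast hab))
        (fun x => zero_le)
    have hsup : ∀ x, (⨆ n, F n x) = ENNReal.ofReal (g x) := by
      intro x
      apply le_antisymm
      · exact iSup_le fun n => Set.indicator_le_self _ _ x
      · obtain ⟨n, hn⟩ := exists_nat_gt |x|
        have hx : x ∈ Set.Ioc (-(n:ℝ)) n := by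
          obtain ⟨ha, hb⟩ := abs_lt.mp hn
          exact ⟨by linarith, le_of_lt hb⟩
        have hFx : F n x = ENNReal.ofReal (g x) := Set.indicator_of_mem hx _
        rw [← hFx]
        exact le_iSup (fun n => F n x) n
    have : (∫⁻ x, ENNReal.ofReal (g x)) = ⨆ n, ∫⁻ x, F n x := by
      rw [← lintegral_iSup hmeas hmono]
      congr 1
      funext x
      exact (hsup x).symm
    rw [this]
    refine iSup_le fun n => ?_
    rw [hF]
    rw [lintegral_indicator measurableSet_Ioc]
    rw [← ofReal_integral_eq_lintegral_ofReal (hgc.integrableOn_Ioc)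
      (ae_of_all _ fun x => hg0 x)]
    apply ENNReal.ofReal_le_ofReal
    have hkey := key n (Nat.cast_nonneg n)
    rwa [intervalIntegral.integral_of_le (by
      have := Nat.cast_nonneg (α := ℝ) n; linarith)] at hkey
  -- conclusions
  set FN := eLpNorm (hatD u) 2 volume with hFN
  set UN := eLpNorm u 2 volume with hUN
  have hFsq : ENNReal.ofReal (∫ x, hatD u x ^ 2) = FN ^ (2:ℝ) := by
    rw [ofReal_integral_eq_lintegral_ofReal hfint (ae_of_all _ fun x => sq_nonneg _),
      lintegral_sq_eq]
  have hUsq : ENNReal.ofReal (∫ x, u x ^ 2) = UN ^ (2:ℝ) := by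
    rw [ofReal_integral_eq_lintegral_ofReal huint (ae_of_all _ fun x => sq_nonneg _),
      lintegral_sq_eq]
  have hBle : ENNReal.ofReal B ≤ FN ^ (2:ℝ) + UN ^ (2:ℝ) := by
    have h' : B ≤ (∫ x, hatD u x ^ 2) + (∫ x, u x ^ 2) := by
      rw [hB, integral_add hfint (huint.div_const 2), integral_div]
      have h0' : 0 ≤ ∫ x, u x ^ 2 := integral_nonneg fun x => sq_nonneg _
      linarith
    calc ENNReal.ofReal B ≤ ENNReal.ofReal ((∫ x, hatD u x ^ 2) + (∫ x, u x ^ 2)) :=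
          ENNReal.ofReal_le_ofReal h'
    _ = FN ^ (2:ℝ) + UN ^ (2:ℝ) := by
          rw [ENNReal.ofReal_add (integral_nonneg fun x => sq_nonneg _)
            (integral_nonneg fun x => sq_nonneg _), hFsq, hUsq]
  have hsum_sq : FN ^ (2:ℝ) + UN ^ (2:ℝ) ≤ (FN + UN) ^ (2:ℝ) := by
    have e2 : ((2:ℝ)) = ((2:ℕ):ℝ) := by norm_num
    rw [e2, ENNReal.rpow_natCast, ENNReal.rpow_natCast, ENNReal.rpow_natCast,
      pow_two, pow_two, pow_two, add_mul, mul_add, mul_add]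
    calc FN * FN + UN * UN ≤ (FN * FN + FN * UN) + (UN * FN + UN * UN) :=
          add_le_add le_self_add le_add_self
    _ = _ := rfl
  have hchain : ENNReal.ofReal B ≤ (FN + UN) ^ (2:ℝ) := le_trans hBle hsum_sq
  have hder : eLpNorm (deriv u) 2 volume ≤ FN + UN := by
    rw [← ENNReal.rpow_le_rpow_iff (z := 2) (by norm_num), sq_eLpNorm]
    refine le_trans (le_trans (lintegral_mono fun x => ENNReal.ofReal_le_ofReal
      (le_add_of_nonneg_right (sq_nonneg _))) key2) hchain
  have hhalf : eLpNorm (fun x => x/2 * u x) 2 volume ≤ FN + UN := by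
    rw [← ENNReal.rpow_le_rpow_iff (z := 2) (by norm_num), sq_eLpNorm]
    refine le_trans (le_trans (lintegral_mono fun x => ENNReal.ofReal_le_ofReal
      (le_add_of_nonneg_left (sq_nonneg _))) key2) hchain
  have hx2 : (fun x : ℝ => x * u x) = (2:ℝ) • (fun x : ℝ => x/2 * u x) := by
    funext x
    simp only [Pi.smul_apply, smul_eq_mul]
    ring
  have hxu : eLpNorm (fun x => x * u x) 2 volume
      = 2 * eLpNorm (fun x => x/2 * u x) 2 volume := by
    rw [hx2, eLpNorm_const_smul]
    congr 1
    norm_num [Real.enorm_eq_ofReal_abs]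
  have hFU_top : FN + UN < ⊤ :=
    ENNReal.add_lt_top.mpr ⟨h1.eLpNorm_lt_top, h0.eLpNorm_lt_top⟩
  have hxu_le : eLpNorm (fun x => x * u x) 2 volume ≤ 2 * (FN + UN) := by
    rw [hxu]
    exact mul_le_mul_right hhalf 2
  refine ⟨⟨⟨hcd.aestronglyMeasurable, lt_of_le_of_lt hder hFU_top⟩,
    ⟨((continuous_id.mul hcu)).aestronglyMeasurable, lt_of_le_of_lt hxu_le ?_⟩⟩, hder, hxu_le⟩
  exact ENNReal.mul_lt_top (by norm_num) hFU_top

noncomputable def SN (m : ℕ) (g : ℝ → ℝ) : ENNReal :=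
  (Finset.range (m+1)).sup (fun i => eLpNorm (hatD^[i] g) 2 volume)

lemma SN_hatD_le (m : ℕ) (g : ℝ → ℝ) : SN m (hatD g) ≤ SN (m+1) g := by
  refine Finset.sup_le fun j hj => ?_
  rw [← Function.iterate_succ_apply]
  unfold SN
  apply Finset.le_sup (f := fun i => eLpNorm (hatD^[i] g) 2 volume)
  simp only [Finset.mem_range] at hj ⊢
  omega

lemma SN_mono {m m' : ℕ} (h : m ≤ m') (g : ℝ → ℝ) : SN m g ≤ SN m' g :=
  Finset.sup_mono (Finset.range_subset_range.mpr (by omega))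

lemma self_le_SN (m : ℕ) (g : ℝ → ℝ) : eLpNorm g 2 volume ≤ SN m g := by
  have : eLpNorm (hatD^[0] g) 2 volume ≤ SN m g := by
    unfold SN
    apply Finset.le_sup (f := fun i => eLpNorm (hatD^[i] g) 2 volume)
    simp
  simpa using this

lemma eLpNorm_const_mul_le (c : ℝ) (k : ℕ) (hck : |c| ≤ (k:ℝ)) (h : ℝ → ℝ) :
    eLpNorm (fun x => c * h x) 2 volume ≤ (k : ENNReal) * eLpNorm h 2 volume := by
  have he : (fun x => c * h x) = c • h := rfl
  rw [he, eLpNorm_const_smul]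
  refine mul_le_mul_left ?_ _
  rw [Real.enorm_eq_ofReal_abs]
  calc ENNReal.ofReal |c| ≤ ENNReal.ofReal (k:ℝ) := ENNReal.ofReal_le_ofReal hck
  _ = (k : ENNReal) := ENNReal.ofReal_natCast k

lemma lower (m : ℕ) : ∃ C : ℕ, 0 < C ∧ ∀ g : ℝ → ℝ, ContDiff ℝ ∞ g →
    (∀ j, j ≤ m → MemLp (hatD^[j] g) 2 (volume : Measure ℝ)) →
    ∀ a b : ℕ, a + b ≤ m →
      MemLp (fun x => x ^ a * iteratedDeriv b g x) 2 (volume : Measure ℝ) ∧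
      eLpNorm (fun x => x ^ a * iteratedDeriv b g x) 2 volume ≤ (C : ENNReal) * SN m g := by
  induction m with
  | zero =>
    refine ⟨1, one_pos, fun g hg hyp a b hab => ?_⟩
    obtain ⟨rfl, rfl⟩ : a = 0 ∧ b = 0 := by omega
    have he : (fun x : ℝ => x ^ 0 * iteratedDeriv 0 g x) = g := by
      funext x; simp
    rw [he]
    exact ⟨hyp 0 le_rfl, by simpa using self_le_SN 0 g⟩
  | succ m IH =>
    obtain ⟨C, hC, hIH⟩ := IH
    set D : ℕ := 4 * (C+1) * (m+3) with hD
    have hDpos : 0 < D := by rw [hD]; positivity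
    have hD1 : 1 ≤ D := hDpos
    refine ⟨D ^ (m+2), pow_pos hDpos _, fun g hg hyp => ?_⟩
    have hyp_m : ∀ j, j ≤ m → MemLp (hatD^[j] g) 2 (volume : Measure ℝ) :=
      fun j hj => hyp j (by omega)
    have hyp_hatD : ∀ j, j ≤ m → MemLp (hatD^[j] (hatD g)) 2 (volume : Measure ℝ) := by
      intro j hj
      rw [← Function.iterate_succ_apply]
      exact hyp (j+1) (by omega)
    have main : ∀ b : ℕ, ∀ a : ℕ, a + b ≤ m + 1 →
        MemLp (fun x => x ^ a * iteratedDeriv b g x) 2 (volume : Measure ℝ) ∧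
        eLpNorm (fun x => x ^ a * iteratedDeriv b g x) 2 volume
          ≤ ((D ^ (b+1) : ℕ) : ENNReal) * SN (m+1) g := by
      intro b
      induction b using Nat.strong_induction_on with
      | _ b inner =>
      intro a hab
      match b, hab with
      | 0, hab =>
        match a, hab with
        | 0, _ =>
          have he : (fun x : ℝ => x ^ 0 * iteratedDeriv 0 g x) = g := by funext x; simp
          rw [he]
          refine ⟨hyp 0 (by omega), le_trans (self_le_SN (m+1) g) ?_⟩
          conv_lhs => rw [← one_mul (SN (m+1) g)]
          exact mul_le_mul_left (by exact_mod_cast Nat.one_le_pow _ _ (by omega)) _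
        | a'+1, hab =>
          have ha'm : a' + 0 ≤ m := by omega
          obtain ⟨hv_mem0, hv_le0⟩ := hIH g hg hyp_m a' 0 ha'm
          obtain ⟨hw_mem0, hw_le0⟩ := hIH (hatD g) (contDiff_hatD hg) hyp_hatD a' 0 ha'm
          have e0g : (fun x : ℝ => x ^ a' * iteratedDeriv 0 g x) = fun x => x ^ a' * g x := by
            funext x; simp
          have e0w : (fun x : ℝ => x ^ a' * iteratedDeriv 0 (hatD g) x)
              = fun x => x ^ a' * hatD g x := by funext x; simp
          rw [e0g] at hv_mem0 hv_le0
          rw [e0w] at hw_mem0 hw_le0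
          set v : ℝ → ℝ := fun x => x ^ a' * g x with hv
          have hvc : ContDiff ℝ ∞ v := (contDiff_id.pow a').mul hg
          have hDv : hatD v = fun x =>
              x ^ a' * hatD g x + (a' : ℝ) * (x ^ (a'-1) * g x) := by
            funext x
            have hdv : deriv v x = (a':ℝ) * x ^ (a'-1) * g x + x ^ a' * deriv g x := by
              have h1 : HasDerivAt (fun y : ℝ => y ^ a') ((a':ℝ) * x ^ (a'-1)) x :=
                hasDerivAt_pow a' x
              have h2 : HasDerivAt g (deriv g x) x :=
                (hg.differentiable (by simp) x).hasDerivAt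
              have h3 := h1.mul h2
              rw [hv]
              exact h3.deriv
            simp only [hatD, hv] at hdv ⊢
            rw [hdv]
            ring
          have hDv_mem : MemLp (hatD v) 2 (volume : Measure ℝ) := by
            rw [hDv]
            have h1 : MemLp (fun x : ℝ => (a' : ℝ) * (x ^ (a'-1) * g x)) 2
                (volume : Measure ℝ) := by
              have := (hIH g hg hyp_m (a'-1) 0 (by omega)).1
              have e : (fun x : ℝ => x ^ (a'-1) * iteratedDeriv 0 g x)
                  = fun x => x ^ (a'-1) * g x := by funext x; simp
              rw [e] at this
              exact this.const_mul _
            have := hw_mem0.add h1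
            exact this
          have hDv_le : eLpNorm (hatD v) 2 volume
              ≤ (((C + (m+1) * C : ℕ)) : ENNReal) * SN (m+1) g := by
            rw [hDv]
            have hcont1 : Continuous (fun x : ℝ => x ^ a' * hatD g x) :=
              ((contDiff_id.pow a').mul (contDiff_hatD hg)).continuous
            have hcont2 : Continuous (fun x : ℝ => (a' : ℝ) * (x ^ (a'-1) * g x)) :=
              continuous_const.mul ((continuous_pow _).mul hg.continuous)
            have tri := eLpNorm_add_le (μ := (volume : Measure ℝ)) hcont1.aestronglyMeasurable
              hcont2.aestronglyMeasurable (by norm_num : (1:ENNReal) ≤ 2)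
            refine le_trans tri ?_
            have b1 : eLpNorm (fun x : ℝ => x ^ a' * hatD g x) 2 volume
                ≤ (C : ENNReal) * SN (m+1) g :=
              le_trans hw_le0 (mul_le_mul_right (SN_hatD_le m g) _)
            have b2 : eLpNorm (fun x : ℝ => (a' : ℝ) * (x ^ (a'-1) * g x)) 2 volume
                ≤ ((m+1 : ℕ) : ENNReal) * ((C : ENNReal) * SN (m+1) g) := by
              obtain ⟨_, hle⟩ := hIH g hg hyp_m (a'-1) 0 (by omega)
              have e : (fun x : ℝ => x ^ (a'-1) * iteratedDeriv 0 g x)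
                  = fun x => x ^ (a'-1) * g x := by funext x; simp
              rw [e] at hle
              refine le_trans (eLpNorm_const_mul_le (a' : ℝ) (m+1)
                (by rw [abs_of_nonneg (Nat.cast_nonneg a')]; exact_mod_cast (by omega : a' ≤ m+1)) _) ?_
              exact mul_le_mul_right (le_trans hle (mul_le_mul_right (SN_mono (by omega) g) _)) _
            refine le_trans (add_le_add b1 b2) ?_
            rw [← mul_assoc]
            rw [show ((C + (m+1) * C : ℕ) : ENNReal) = (C : ENNReal) + ((m+1:ℕ) : ENNReal) * (C : ENNReal) by push_cast; ring]
            rw [add_mul]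
          -- apply L1 to v
          have hv_memv : MemLp v 2 (volume : Measure ℝ) := hv_mem0
          obtain ⟨⟨_, hxv_mem⟩, _, hxv_le⟩ := L1 hvc hv_memv hDv_mem
          have exv : (fun x : ℝ => x * v x) = fun x => x ^ (a'+1) * g x := by
            funext x; rw [hv]; ring
          rw [exv] at hxv_mem hxv_le
          have e1 : (fun x : ℝ => x ^ (a'+1) * iteratedDeriv 0 g x)
              = fun x => x ^ (a'+1) * g x := by funext x; simp
          rw [e1]
          refine ⟨hxv_mem, le_trans hxv_le ?_⟩
          have hvle' : eLpNorm v 2 volume ≤ (C : ENNReal) * SN (m+1) g :=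
            le_trans hv_le0 (mul_le_mul_right (SN_mono (by omega) g) _)
          calc 2 * (eLpNorm (hatD v) 2 volume + eLpNorm v 2 volume)
              ≤ 2 * ((((C + (m+1) * C : ℕ)) : ENNReal) * SN (m+1) g
                + (C : ENNReal) * SN (m+1) g) := by
                exact mul_le_mul_right (add_le_add hDv_le hvle') 2
          _ = ((2 * ((C + (m+1) * C) + C) : ℕ) : ENNReal) * SN (m+1) g := by
                push_cast; ring
          _ ≤ ((D ^ (0+1) : ℕ) : ENNReal) * SN (m+1) g := by
                refine mul_le_mul_left ?_ _
                have : 2 * ((C + (m+1) * C) + C) ≤ D ^ 1 := by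
                  simp only [pow_one, hD]; nlinarith
                exact_mod_cast this
      | b'+1, hab =>
        have hfe : (fun x : ℝ => x ^ a * iteratedDeriv (b'+1) g x)
            = fun x => x ^ a * iteratedDeriv b' (hatD g) x
              - ((1/2 : ℝ) * (x ^ (a+1) * iteratedDeriv b' g x)
                + ((b' : ℝ)/2) * (x ^ a * iteratedDeriv (b'-1) g x)) := by
          funext x
          have h := itd_hatD hg b' x
          have h2 : iteratedDeriv (b'+1) g x = iteratedDeriv b' (hatD g) x
              - (1/2 : ℝ) * (x * iteratedDeriv b' g x + b' * iteratedDeriv (b'-1) g x) := by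
            rw [h]; ring
          rw [h2]; ring
        obtain ⟨hA1m, hA1l⟩ := hIH (hatD g) (contDiff_hatD hg) hyp_hatD a b' (by omega)
        obtain ⟨hA2m, hA2l⟩ := inner b' (by omega) (a+1) (by omega)
        obtain ⟨hA3m, hA3l⟩ := inner (b'-1) (by omega) a (by omega)
        have cA1 : Continuous (fun x : ℝ => x ^ a * iteratedDeriv b' (hatD g) x) :=
          (continuous_pow a).mul (contDiff_itd (contDiff_hatD hg) b').continuous
        have cA2 : Continuous (fun x : ℝ => (1/2 : ℝ) * (x ^ (a+1) * iteratedDeriv b' g x)) :=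
          continuous_const.mul ((continuous_pow _).mul (contDiff_itd hg b').continuous)
        have cA3 : Continuous (fun x : ℝ => ((b' : ℝ)/2) * (x ^ a * iteratedDeriv (b'-1) g x)) :=
          continuous_const.mul ((continuous_pow _).mul (contDiff_itd hg (b'-1)).continuous)
        have hmem : MemLp (fun x : ℝ => x ^ a * iteratedDeriv (b'+1) g x) 2
            (volume : Measure ℝ) := by
          rw [hfe]
          have := hA1m.sub ((hA2m.const_mul ((1:ℝ)/2)).add (hA3m.const_mul ((b' : ℝ)/2)))
          exact this
        refine ⟨hmem, ?_⟩
        rw [hfe]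
        have tri1 := eLpNorm_sub_le (μ := (volume : Measure ℝ)) (p := 2)
          cA1.aestronglyMeasurable (cA2.add cA3).aestronglyMeasurable (by norm_num)
        have tri2 := eLpNorm_add_le (μ := (volume : Measure ℝ)) (p := 2)
          cA2.aestronglyMeasurable cA3.aestronglyMeasurable (by norm_num)
        have b1 : eLpNorm (fun x : ℝ => x ^ a * iteratedDeriv b' (hatD g) x) 2 volume
            ≤ (C : ENNReal) * SN (m+1) g :=
          le_trans hA1l (mul_le_mul_right (SN_hatD_le m g) _)
        have b2 : eLpNorm (fun x : ℝ => (1/2 : ℝ) * (x ^ (a+1) * iteratedDeriv b' g x)) 2 volume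
            ≤ ((D ^ (b'+1) : ℕ) : ENNReal) * SN (m+1) g := by
          refine le_trans (eLpNorm_const_mul_le ((1:ℝ)/2) 1 (by rw [abs_of_nonneg] <;> norm_num) _) ?_
          rw [Nat.cast_one, one_mul]
          exact hA2l
        have b3 : eLpNorm (fun x : ℝ => ((b' : ℝ)/2) * (x ^ a * iteratedDeriv (b'-1) g x)) 2 volume
            ≤ (((m+1) * D ^ (b'-1+1) : ℕ) : ENNReal) * SN (m+1) g := by
          refine le_trans (eLpNorm_const_mul_le ((b' : ℝ)/2) (m+1) ?_ _) ?_
          · rw [abs_of_nonneg (by positivity)]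
            have : (b' : ℝ) ≤ (m+1 : ℕ) := by exact_mod_cast (by omega : b' ≤ m+1)
            push_cast at this ⊢
            linarith
          · refine le_trans (mul_le_mul_right hA3l _) ?_
            rw [← mul_assoc]
            refine mul_le_mul_left (le_of_eq ?_) _
            push_cast; ring
        have total : eLpNorm ((fun x : ℝ => x ^ a * iteratedDeriv b' (hatD g) x)
              - ((fun x : ℝ => (1/2 : ℝ) * (x ^ (a+1) * iteratedDeriv b' g x))
                + fun x : ℝ => ((b' : ℝ)/2) * (x ^ a * iteratedDeriv (b'-1) g x))) 2 volume
            ≤ ((C + (D ^ (b'+1) + (m+1) * D ^ (b'-1+1)) : ℕ) : ENNReal) * SN (m+1) g := by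
          refine le_trans tri1 ?_
          refine le_trans (add_le_add b1 (le_trans tri2 (add_le_add b2 b3))) (le_of_eq ?_)
          push_cast
          ring
        refine le_trans (le_of_eq (by rfl)) (le_trans total (mul_le_mul_left ?_ _))
        have hnat : C + (D ^ (b'+1) + (m+1) * D ^ (b'-1+1)) ≤ D ^ (b'+1+1) := by
          have h1e : 1 ≤ D ^ (b'+1) := Nat.one_le_pow _ _ hDpos
          have hp1 : D ^ (b'-1+1) ≤ D ^ (b'+1) := Nat.pow_le_pow_right hD1 (by omega)
          have hDC : C + m + 2 ≤ D := by rw [hD]; nlinarith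
          have k1 : D ^ (b'+1) * (C+m+2) ≤ D ^ (b'+1) * D := Nat.mul_le_mul_left _ hDC
          conv_rhs => rw [pow_succ]
          nlinarith [k1, h1e, hp1]
        exact_mod_cast hnat
    intro a b hab
    obtain ⟨h1, h2⟩ := main b a hab
    refine ⟨h1, le_trans h2 (mul_le_mul_left ?_ _)⟩
    exact_mod_cast Nat.pow_le_pow_right (by omega) (by omega)

noncomputable def TN (m : ℕ) (u : ℝ → ℝ) : ENNReal :=
  ((Finset.range (m+1) ×ˢ Finset.range (m+1)).filter (fun p => p.1 + p.2 ≤ m)).sup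
    (fun p => eLpNorm (fun x : ℝ => x ^ p.1 * iteratedDeriv p.2 u x) 2 volume)

lemma TN_elem_le (m a b : ℕ) (hab : a + b ≤ m) (u : ℝ → ℝ) :
    eLpNorm (fun x : ℝ => x ^ a * iteratedDeriv b u x) 2 volume ≤ TN m u := by
  unfold TN
  have h := Finset.le_sup (α := ENNReal)
    (f := fun p : ℕ × ℕ => eLpNorm (fun x : ℝ => x ^ p.1 * iteratedDeriv p.2 u x) 2 volume)
    (s := (Finset.range (m+1) ×ˢ Finset.range (m+1)).filter (fun p => p.1 + p.2 ≤ m))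
    (b := (a, b)) (by
      simp only [Finset.mem_filter, Finset.mem_product, Finset.mem_range]
      omega)
  exact h

lemma TN_hatD_le (m : ℕ) {u : ℝ → ℝ} (hu : ContDiff ℝ ∞ u) :
    TN m (hatD u) ≤ ((m+3 : ℕ) : ENNReal) * TN (m+1) u := by
  refine Finset.sup_le fun p hp => ?_
  simp only [Finset.mem_filter, Finset.mem_product, Finset.mem_range] at hp
  obtain ⟨⟨_, _⟩, hpm⟩ := hp
  have hfe : (fun x : ℝ => x ^ p.1 * iteratedDeriv p.2 (hatD u) x)
      = fun x : ℝ => x ^ p.1 * iteratedDeriv (p.2+1) u x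
        + ((1/2 : ℝ) * (x ^ (p.1+1) * iteratedDeriv p.2 u x)
          + ((p.2 : ℝ)/2) * (x ^ p.1 * iteratedDeriv (p.2-1) u x)) := by
    funext x
    rw [itd_hatD hu p.2 x]
    ring
  rw [hfe]
  have c1 : Continuous (fun x : ℝ => x ^ p.1 * iteratedDeriv (p.2+1) u x) :=
    (continuous_pow _).mul (contDiff_itd hu _).continuous
  have c2 : Continuous (fun x : ℝ => (1/2 : ℝ) * (x ^ (p.1+1) * iteratedDeriv p.2 u x)) :=
    continuous_const.mul ((continuous_pow _).mul (contDiff_itd hu _).continuous)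
  have c3 : Continuous (fun x : ℝ => ((p.2 : ℝ)/2) * (x ^ p.1 * iteratedDeriv (p.2-1) u x)) :=
    continuous_const.mul ((continuous_pow _).mul (contDiff_itd hu _).continuous)
  have tri1 := eLpNorm_add_le (μ := (volume : Measure ℝ)) (p := 2)
    c1.aestronglyMeasurable (c2.add c3).aestronglyMeasurable (by norm_num)
  have tri2 := eLpNorm_add_le (μ := (volume : Measure ℝ)) (p := 2)
    c2.aestronglyMeasurable c3.aestronglyMeasurable (by norm_num)
  refine le_trans tri1 ?_
  have b1 : eLpNorm (fun x : ℝ => x ^ p.1 * iteratedDeriv (p.2+1) u x) 2 volume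
      ≤ TN (m+1) u := TN_elem_le (m+1) p.1 (p.2+1) (by omega) u
  have b2 : eLpNorm (fun x : ℝ => (1/2 : ℝ) * (x ^ (p.1+1) * iteratedDeriv p.2 u x)) 2 volume
      ≤ ((1:ℕ) : ENNReal) * TN (m+1) u := by
    refine le_trans (eLpNorm_const_mul_le ((1:ℝ)/2) 1 (by rw [abs_of_nonneg] <;> norm_num) _) ?_
    exact mul_le_mul_right (TN_elem_le (m+1) (p.1+1) p.2 (by omega) u) _
  have b3 : eLpNorm (fun x : ℝ => ((p.2 : ℝ)/2) * (x ^ p.1 * iteratedDeriv (p.2-1) u x)) 2 volume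
      ≤ ((m+1 : ℕ) : ENNReal) * TN (m+1) u := by
    refine le_trans (eLpNorm_const_mul_le ((p.2 : ℝ)/2) (m+1) ?_ _) ?_
    · rw [abs_of_nonneg (by positivity)]
      have h2 : (p.2 : ℝ) ≤ ((m+1 : ℕ) : ℝ) := by exact_mod_cast (by omega : p.2 ≤ m+1)
      push_cast at h2 ⊢
      linarith
    · exact mul_le_mul_right (TN_elem_le (m+1) p.1 (p.2-1) (by omega) u) _
  refine le_trans (add_le_add b1 (le_trans tri2 (add_le_add b2 b3))) (le_of_eq ?_)
  push_cast
  ring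

lemma upper (m : ℕ) : ∃ C : ℕ, 0 < C ∧ ∀ u : ℝ → ℝ, ContDiff ℝ ∞ u →
    ∀ i, i ≤ m → eLpNorm (hatD^[i] u) 2 volume ≤ (C : ENNReal) * TN m u := by
  induction m with
  | zero =>
    refine ⟨1, one_pos, fun u hu i hi => ?_⟩
    obtain rfl : i = 0 := by omega
    have he : hatD^[0] u = fun x : ℝ => x ^ 0 * iteratedDeriv 0 u x := by
      funext x; simp
    rw [he, Nat.cast_one, one_mul]
    exact TN_elem_le 0 0 0 (by omega) u
  | succ m IH =>
    obtain ⟨C, hC, hIH⟩ := IH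
    refine ⟨C * (m+3) + 1, by positivity, fun u hu i hi => ?_⟩
    match i with
    | 0 =>
      have he : hatD^[0] u = fun x : ℝ => x ^ 0 * iteratedDeriv 0 u x := by
        funext x; simp
      rw [he]
      refine le_trans (TN_elem_le (m+1) 0 0 (by omega) u) ?_
      conv_lhs => rw [← one_mul (TN (m+1) u)]
      exact mul_le_mul_left (by exact_mod_cast (by omega : 1 ≤ C * (m+3) + 1)) _
    | i'+1 =>
      rw [Function.iterate_succ_apply]
      refine le_trans (hIH (hatD u) (contDiff_hatD hu) i' (by omega)) ?_
      refine le_trans (mul_le_mul_right (TN_hatD_le m hu) _) ?_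
      rw [← mul_assoc]
      refine mul_le_mul_left ?_ _
      exact_mod_cast (by nlinarith : C * (m+3) ≤ C * (m+3) + 1)

/-- Sobolev-like equivalence for the creation operator: there exist constants
`K₁(m), K₂(m) > 0` depending only on `m` such that for every smooth `u` with
`∂̂ⁿ u ∈ L²(ℝ)` for `n = 0,…,m`, all functions `x^{m₁} u^{(m₂)}` with
`m₁ + m₂ ≤ m` belong to `L²(ℝ)` and
`K₁ max_{m₁+m₂≤m} ‖x^{m₁} u^{(m₂)}‖ ≤ max_{0≤i≤m} ‖∂̂ⁱ u‖
  ≤ K₂ max_{m₁+m₂≤m} ‖x^{m₁} u^{(m₂)}‖`. -/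
theorem sobolev_like_equivalence_creation_operator (m : ℕ) :
    ∃ K₁ K₂ : ℝ, 0 < K₁ ∧ 0 < K₂ ∧
      ∀ u : ℝ → ℝ, ContDiff ℝ (⊤ : ℕ∞) u →
        (∀ n : ℕ, n ≤ m → MemLp (hatD^[n] u) 2 (volume : Measure ℝ)) →
        (∀ m₁ m₂ : ℕ, m₁ + m₂ ≤ m →
            MemLp (fun x : ℝ => x ^ m₁ * iteratedDeriv m₂ u x) 2 (volume : Measure ℝ)) ∧
          ENNReal.ofReal K₁ *
              ((Finset.range (m + 1) ×ˢ Finset.range (m + 1)).filter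
                  (fun p => p.1 + p.2 ≤ m)).sup
                (fun p =>
                  eLpNorm (fun x : ℝ => x ^ p.1 * iteratedDeriv p.2 u x) 2
                    (volume : Measure ℝ)) ≤
            (Finset.range (m + 1)).sup
              (fun i => eLpNorm (hatD^[i] u) 2 (volume : Measure ℝ)) ∧
          (Finset.range (m + 1)).sup
              (fun i => eLpNorm (hatD^[i] u) 2 (volume : Measure ℝ)) ≤
            ENNReal.ofReal K₂ *
              ((Finset.range (m + 1) ×ˢ Finset.range (m + 1)).filter
                  (fun p => p.1 + p.2 ≤ m)).sup
                (fun p =>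
                  eLpNorm (fun x : ℝ => x ^ p.1 * iteratedDeriv p.2 u x) 2
                    (volume : Measure ℝ)) := by
  obtain ⟨C₁, hC₁, hlow⟩ := lower m
  obtain ⟨C₂, hC₂, hup⟩ := upper m
  refine ⟨(C₁ : ℝ)⁻¹, (C₂ : ℝ), by positivity, by exact_mod_cast hC₂, fun u hu hyp => ?_⟩
  have hu' : ContDiff ℝ ∞ u := hu.of_le (by simp)
  have eS : (Finset.range (m + 1)).sup
      (fun i => eLpNorm (hatD^[i] u) 2 (volume : Measure ℝ)) = SN m u := rfl
  have eT : ((Finset.range (m + 1) ×ˢ Finset.range (m + 1)).filter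
      (fun p => p.1 + p.2 ≤ m)).sup
        (fun p => eLpNorm (fun x : ℝ => x ^ p.1 * iteratedDeriv p.2 u x) 2
          (volume : Measure ℝ)) = TN m u := rfl
  refine ⟨fun m₁ m₂ h => (hlow u hu' hyp m₁ m₂ h).1, ?_, ?_⟩
  · rw [eS, eT]
    have hT : TN m u ≤ (C₁ : ENNReal) * SN m u := by
      refine Finset.sup_le fun p hp => ?_
      simp only [Finset.mem_filter, Finset.mem_product, Finset.mem_range] at hp
      exact (hlow u hu' hyp p.1 p.2 hp.2).2
    calc ENNReal.ofReal (C₁ : ℝ)⁻¹ * TN m u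
        ≤ ENNReal.ofReal (C₁ : ℝ)⁻¹ * ((C₁ : ENNReal) * SN m u) := mul_le_mul_right hT _
    _ = SN m u := by
        rw [ENNReal.ofReal_inv_of_pos (by exact_mod_cast hC₁), ENNReal.ofReal_natCast,
          ← mul_assoc, ENNReal.inv_mul_cancel (by exact_mod_cast hC₁.ne')
            (ENNReal.natCast_ne_top _), one_mul]
  · rw [eS, eT]
    refine Finset.sup_le fun i hi => ?_
    refine le_trans (hup u hu' i (by simp only [Finset.mem_range] at hi; omega)) ?_
    rw [ENNReal.ofReal_natCast]
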